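/- arXiv:2510.03179 — 3 statements merged into one kernel-verified Lean document; each statement's English description precedes it below -/
import Mathlib

section
/- Let N be a positive integer, let Λ be the set of positive divisors of N, and let f : Λ → A be a function into an additive abelian group A. Define f₊(n) = ∑_{d ∣ n} f(d) and f⁺(n) = ∑_{d ∈ Λ, n ∣ d} f(d). Then for every n ∈ Λ, f⁺(n) = ∑_{ρ ⊆ π(n)} (−1)^{|ρ|} f₊(n(ρ)), where π(n) is the set of prime divisors of n, n̲ = n / ∏_{p ∈ π(n)} p, and n(ρ) = n̲_ρ · N_{ρ'} (i.e., n(ρ) has p-adic valuation v_p(n)−1 for p ∈ ρ and v_p(N) for primes p ∉ ρ). -/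
/-!
Expanding each `f₊(n(ρ))` over the divisors `d` of `N`, the coefficient of `f d` on the right is
`∑_{ρ ⊆ π(n)} (-1)^|ρ| [d ∣ n(ρ)]`. For `d ∣ N` we have `d ∣ n(ρ)` exactly when every `p ∈ ρ`
satisfies `v_p(d) < v_p(n)`, so this coefficient is the alternating sum over all subsets of the set
of such primes; it vanishes unless that set is empty, that is, unless `n ∣ d`.
-/

/-- `nrho N n ρ` is the integer with `q`-adic valuation `v_q(n) - 1` for `q ∈ ρ`
and `v_q(N)` for primes `q ∉ ρ` (where `ρ` is a set of primes dividing `n`). -/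
def nrho (N n : ℕ) (ρ : Finset ℕ) : ℕ :=
  ∏ p ∈ N.primeFactors, p ^ (if p ∈ ρ then n.factorization p - 1 else N.factorization p)

open Finset

theorem Finset.sum_powerset_neg_one_pow_card_smul_ite_subset {α M : Type*} [DecidableEq α]
    [AddCommGroup M] {P S : Finset α} (hS : S ⊆ P) (a : M) :
    ∑ ρ ∈ P.powerset, (-1 : ℤ) ^ #ρ • (if ρ ⊆ S then a else 0) = if S = ∅ then a else 0 := by
  have hfilter : {ρ ∈ P.powerset | ρ ⊆ S} = S.powerset := by
    ext ρ
    simpa only [mem_filter, mem_powerset, and_iff_right_iff_imp] using fun h => h.trans hS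
  simp only [smul_ite, smul_zero]
  rw [← sum_filter, hfilter, ← sum_smul, sum_powerset_neg_one_pow_card, ite_smul, one_smul,
    zero_smul]

namespace Nat

def deficientPrimes (n d : ℕ) : Finset ℕ :=
  {p ∈ n.primeFactors | d.factorization p < n.factorization p}

theorem deficientPrimes_subset (n d : ℕ) : deficientPrimes n d ⊆ n.primeFactors :=
  filter_subset _ _

theorem deficientPrimes_eq_empty_iff {n d : ℕ} (hn : n ≠ 0) (hd : d ≠ 0) :
    deficientPrimes n d = ∅ ↔ n ∣ d := by
  rw [← factorization_prime_le_iff_dvd hn hd, deficientPrimes, filter_eq_empty_iff]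
  refine forall_congr' fun p =>
    ⟨fun h hp => ?_, fun h hp => not_lt.2 (h (prime_of_mem_primeFactors hp))⟩
  by_cases hpn : p ∈ n.primeFactors
  · exact not_lt.1 (h hpn)
  · rw [Finsupp.notMem_support_iff.1 (by rwa [support_factorization])]
    exact zero_le _

end Nat

theorem nrho_ne_zero (N n : ℕ) (ρ : Finset ℕ) : nrho N n ρ ≠ 0 :=
  prod_ne_zero_iff.2 fun _ hp => pow_ne_zero _ (Nat.prime_of_mem_primeFactors hp).ne_zero

theorem factorization_nrho (N n : ℕ) (ρ : Finset ℕ) (p : ℕ) :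
    (nrho N n ρ).factorization p =
      if p ∈ N.primeFactors then
        (if p ∈ ρ then n.factorization p - 1 else N.factorization p) else 0 := by
  rw [nrho, Nat.factorization_prod fun q hq =>
      pow_ne_zero _ (Nat.prime_of_mem_primeFactors hq).ne_zero,
    Finset.sum_apply', ← sum_ite_eq' N.primeFactors p fun q =>
      if q ∈ ρ then n.factorization q - 1 else N.factorization q]
  refine sum_congr rfl fun q hq => ?_
  rw [(Nat.prime_of_mem_primeFactors hq).factorization_pow, Finsupp.single_apply]

section nrho

variable {N n : ℕ} {ρ : Finset ℕ}

theorem nrho_dvd (hN : N ≠ 0) (hn : n ∣ N) : nrho N n ρ ∣ N := by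
  have hnN := (Nat.factorization_le_iff_dvd (ne_zero_of_dvd_ne_zero hN hn) hN).2 hn
  refine (Nat.factorization_le_iff_dvd (nrho_ne_zero N n ρ) hN).1 fun p => ?_
  rw [factorization_nrho]
  split_ifs
  · exact (Nat.sub_le _ _).trans (hnN p)
  · exact le_rfl
  · exact Nat.zero_le _

theorem dvd_nrho_iff (hN : N ≠ 0) (hn : n ∣ N) (hρ : ρ ⊆ n.primeFactors) {d : ℕ} (hd : d ∣ N) :
    d ∣ nrho N n ρ ↔ ρ ⊆ Nat.deficientPrimes n d := by
  have hd0 := ne_zero_of_dvd_ne_zero hN hd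
  have hdN := (Nat.factorization_le_iff_dvd hd0 hN).2 hd
  rw [← Nat.factorization_prime_le_iff_dvd hd0 (nrho_ne_zero N n ρ)]
  constructor
  · intro h p hpρ
    have hpn := hρ hpρ
    have hvn : n.factorization p ≠ 0 := Finsupp.mem_support_iff.1 hpn
    have hvd := h p (Nat.prime_of_mem_primeFactors hpn)
    rw [factorization_nrho, if_pos (Nat.primeFactors_mono hn hN hpn), if_pos hpρ] at hvd
    exact mem_filter.2 ⟨hpn, by omega⟩
  · intro h p _
    rw [factorization_nrho]
    split_ifs with hpN hpρ
    · have := (mem_filter.1 (h hpρ)).2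
      omega
    · exact hdN p
    · exact (hdN p).trans_eq (Finsupp.notMem_support_iff.1 (by rwa [Nat.support_factorization]))

end nrho

theorem stmt_0_general {A : Type*} [AddCommGroup A] (N : ℕ) (hN : 0 < N) (f : ℕ → A)
    (n : ℕ) (hn : n ∣ N) :
    (∑ d ∈ N.divisors.filter (fun d => n ∣ d), f d) =
      ∑ ρ ∈ n.primeFactors.powerset,
        (-1 : ℤ) ^ ρ.card • ∑ d ∈ (nrho N n ρ).divisors, f d := by
  classical
  have hN0 := hN.ne'
  have hdivisors (ρ : Finset ℕ) : (nrho N n ρ).divisors = {d ∈ N.divisors | d ∣ nrho N n ρ} :=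
    (Nat.divisors_filter_dvd_of_dvd hN0 (nrho_dvd hN0 hn)).symm
  simp_rw [hdivisors, sum_filter, smul_sum]
  rw [sum_comm]
  refine sum_congr rfl fun d hd => ?_
  have hdN := Nat.dvd_of_mem_divisors hd
  symm
  calc ∑ ρ ∈ n.primeFactors.powerset, (-1 : ℤ) ^ #ρ • (if d ∣ nrho N n ρ then f d else 0)
      = ∑ ρ ∈ n.primeFactors.powerset,
          (-1 : ℤ) ^ #ρ • (if ρ ⊆ Nat.deficientPrimes n d then f d else 0) :=
        sum_congr rfl fun ρ hρ => by simp only [dvd_nrho_iff hN0 hn (mem_powerset.1 hρ) hdN]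
    _ = if n ∣ d then f d else 0 := by
        rw [sum_powerset_neg_one_pow_card_smul_ite_subset (Nat.deficientPrimes_subset n d)]
        simp only [Nat.deficientPrimes_eq_empty_iff (ne_zero_of_dvd_ne_zero hN0 hn)
            (ne_zero_of_dvd_ne_zero hN0 hdN)]

theorem stmt_0 {A : Type*} [AddCommGroup A] (N : ℕ) (hN : 0 < N) (f : ℕ → A)
    (n : ℕ) (hn0 : 0 < n) (hn : n ∣ N) :
    (∑ d ∈ N.divisors.filter (fun d => n ∣ d), f d) =
      ∑ ρ ∈ n.primeFactors.powerset,
        (-1 : ℤ) ^ ρ.card • ∑ d ∈ (nrho N n ρ).divisors, f d :=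
  stmt_0_general N hN f n hn
end

section
/- Let G be a finite group, χ the character of a representation 𝒳 : G → GL_d(ℂ), and n a positive integer. There exist a subgroup H ≤ G and a one-dimensional character φ of H with ⟨χ|_H, φ⟩ > 0 and n ∣ o(φ) if and only if there exist x ∈ G and an eigenvalue ζ of 𝒳(x) with n = o(ζ). -/
/-!
The average `|H|⁻¹ ∑ χ(h) φ(h)⁻¹` is the dimension of the invariants of `𝒳|_H ⊗ φ⁻¹`, i.e. of the
space of common eigenvectors `v` with `𝒳(h) v = φ(h) v` for all `h ∈ H`; so the left-hand side asks
for such a `v ≠ 0`. Given one, some `h₀ ∈ H` has `o(φ(h₀)) = o(φ)` (the exponent of the finite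
abelian group `φ(H)` is attained), and `v` is an eigenvector of `𝒳(h₀ ^ (o(φ) / n))` with
eigenvalue of order `n`. Conversely, an eigenvector of `𝒳(x)` spans a line stable under `⟨x⟩`,
which affords a linear character `φ` of `⟨x⟩` with `φ(x) = ζ`, so `o(ζ) ∣ o(φ)`.
-/

open Module

theorem MonoidHom.exists_orderOf_apply_eq_orderOf {H M : Type*} [Group H] [Finite H]
    [CommGroup M] (φ : H →* M) : ∃ h, orderOf (φ h) = orderOf φ := by
  have : Finite φ.range := Finite.of_surjective _ φ.rangeRestrict_surjective
  obtain ⟨r, hr⟩ :=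
    Monoid.exists_orderOf_eq_exponent (Monoid.ExponentExists.of_finite (G := φ.range))
  obtain ⟨h, hh⟩ := r.2
  have h_exp : orderOf (φ h) = Monoid.exponent φ.range := by
    rw [hh, Subgroup.orderOf_coe, hr]
  refine ⟨h, Nat.dvd_antisymm (orderOf_map_dvd (MonoidHom.eval h) φ) ?_⟩
  refine orderOf_dvd_of_pow_eq_one (MonoidHom.ext fun h' => ?_)
  have := Monoid.pow_exponent_eq_one (φ.rangeRestrict h')
  rw [← h_exp] at this
  simpa using congrArg Subtype.val this

namespace Representation

variable {k G V : Type*} [Field k] [Group G] [AddCommGroup V] [Module k V]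

def twist (ρ : Representation k G V) (φ : G →* kˣ) : Representation k G V where
  toFun g := (↑(φ g)⁻¹ : k) • ρ g
  map_one' := by simp
  map_mul' g h := by
    rw [map_mul, map_mul, mul_inv, Units.val_mul, smul_mul_smul_comm, mul_comm]

theorem twist_apply (ρ : Representation k G V) (φ : G →* kˣ) (g : G) :
    ρ.twist φ g = (↑(φ g)⁻¹ : k) • ρ g := rfl

theorem mem_invariants_twist_iff (ρ : Representation k G V) (φ : G →* kˣ) (v : V) :
    v ∈ (ρ.twist φ).invariants ↔ ∀ g, ρ g v = (φ g : k) • v := by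
  refine forall_congr' fun g => ?_
  rw [twist_apply, LinearMap.smul_apply, ← Units.smul_def, inv_smul_eq_iff, Units.smul_def]

theorem char_twist [FiniteDimensional k V] (ρ : Representation k G V) (φ : G →* kˣ) (g : G) :
    (ρ.twist φ).character g = ρ.character g * (↑(φ g)⁻¹ : k) := by
  rw [character, twist_apply, map_smul, smul_eq_mul, mul_comm, character]

theorem card_inv_mul_sum_char_mul_inv_eq_finrank [Fintype G] [Invertible (Nat.card G : k)]
    [FiniteDimensional k V] (ρ : Representation k G V) (φ : G →* kˣ) :
    (Nat.card G : k)⁻¹ * ∑ g : G, ρ.character g * (↑(φ g)⁻¹ : k) =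
      finrank k (ρ.twist φ).invariants := by
  simp_rw [← char_twist, card_inv_mul_sum_char_eq_finrank]

theorem exists_monoidHom_apply_eq_smul (ρ : Representation k G V) {v : V} (hv : v ≠ 0)
    (h : ∀ g, ∃ c : k, ρ g v = c • v) : ∃ φ : G →* kˣ, ∀ g, ρ g v = (φ g : k) • v := by
  choose c hc using h
  have hc_one : c 1 = 1 := smul_left_injective k hv <| by simp [← hc]
  have hc_mul (g g' : G) : c (g * g') = c g * c g' := smul_left_injective k hv <| by
    change c (g * g') • v = (c g * c g') • v
    rw [← hc, map_mul, Module.End.mul_apply, hc, map_smul, hc, smul_smul, mul_comm]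
  exact ⟨MonoidHom.toHomUnits ⟨⟨c, hc_one⟩, hc_mul⟩, hc⟩

theorem finrank_invariants_twist_pos_iff [FiniteDimensional k V] (ρ : Representation k G V)
    (φ : G →* kˣ) :
    0 < finrank k (ρ.twist φ).invariants ↔ ∃ v ≠ 0, ∀ g, ρ g v = (φ g : k) • v := by
  rw [Nat.pos_iff_ne_zero, Ne, Submodule.finrank_eq_zero, ← Ne, Submodule.ne_bot_iff]
  simp only [mem_invariants_twist_iff, and_comm]

theorem exists_hasEigenvalue_orderOf_eq_of_dvd [Finite G] (ρ : Representation k G V)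
    (φ : G →* kˣ) {v : V} (hv : v ≠ 0) (hφ : ∀ g, ρ g v = (φ g : k) • v) {n : ℕ}
    (hdvd : n ∣ orderOf φ) : ∃ x ζ, Module.End.HasEigenvalue (ρ x) ζ ∧ n = orderOf ζ := by
  obtain ⟨g, hg⟩ := φ.exists_orderOf_apply_eq_orderOf
  have hg_pos : orderOf (φ g) ≠ 0 :=
    (Nat.pos_of_dvd_of_pos (orderOf_map_dvd φ g) (orderOf_pos g)).ne'
  refine ⟨g ^ (orderOf φ / n), φ (g ^ (orderOf φ / n)),
    Module.End.hasEigenvalue_of_hasEigenvector ⟨Module.End.mem_eigenspace_iff.2 (hφ _), hv⟩, ?_⟩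
  rw [orderOf_units, map_pow, ← hg, orderOf_pow_orderOf_div hg_pos (hg ▸ hdvd)]

theorem exists_monoidHom_zpowers_of_hasEigenvalue [Finite G] (ρ : Representation k G V) {x : G}
    {ζ : k} (hζ : Module.End.HasEigenvalue (ρ x) ζ) :
    ∃ φ : Subgroup.zpowers x →* kˣ,
      (∃ v ≠ 0, ∀ h : Subgroup.zpowers x, ρ h v = (φ h : k) • v) ∧ orderOf ζ ∣ orderOf φ := by
  obtain ⟨v, hv⟩ := hζ.exists_hasEigenvector
  have h_line (h : Subgroup.zpowers x) : ∃ c : k, ρ h v = c • v := by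
    obtain ⟨m, hm⟩ := mem_powers_iff_mem_zpowers.2 h.2
    exact ⟨ζ ^ m, by rw [← hm, map_pow, hv.pow_apply]⟩
  obtain ⟨φ, hφ⟩ :=
    exists_monoidHom_apply_eq_smul (ρ.comp (Subgroup.zpowers x).subtype) hv.2 h_line
  have hφx : (φ ⟨x, Subgroup.mem_zpowers x⟩ : k) = ζ :=
    smul_left_injective k hv.2 ((hφ _).symm.trans hv.apply_eq_smul)
  refine ⟨φ, ⟨v, hv.2, hφ⟩, ?_⟩
  rw [← hφx, orderOf_units]
  exact orderOf_map_dvd (MonoidHom.eval _) φ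

end Representation

theorem stmt_11_general (G : Type) [Group G] [Fintype G] (V : FDRep ℂ G) (n : ℕ) :
    (∃ (H : Subgroup G) (φ : H →* ℂˣ),
        (∃ m : ℕ, 0 < m ∧
          (Nat.card H : ℂ)⁻¹ * ∑ᶠ h : H, V.character (h : G) * ((φ h)⁻¹ : ℂˣ) = (m : ℂ)) ∧
        n ∣ orderOf φ) ↔
      ∃ (x : G) (ζ : ℂ), Module.End.HasEigenvalue (V.ρ x) ζ ∧ n = orderOf ζ := by
  have h_avg (H : Subgroup G) (φ : H →* ℂˣ) :
      (Nat.card H : ℂ)⁻¹ * ∑ᶠ h : H, V.character (h : G) * ((φ h)⁻¹ : ℂˣ) =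
        finrank ℂ (Representation.twist (V.ρ.comp H.subtype) φ).invariants := by
    have : Fintype H := Fintype.ofFinite H
    have : Invertible (Nat.card H : ℂ) := invertibleOfNonzero (Nat.cast_ne_zero.2 Nat.card_pos.ne')
    have h_char (h : H) : V.character h = Representation.character (V.ρ.comp H.subtype) h := rfl
    rw [finsum_eq_sum_of_fintype]
    simp only [h_char]
    exact Representation.card_inv_mul_sum_char_mul_inv_eq_finrank _ φ
  simp only [h_avg, Nat.cast_inj, exists_eq_right',
    Representation.finrank_invariants_twist_pos_iff]
  constructor
  · rintro ⟨H, φ, ⟨v, hv, hφ⟩, hdvd⟩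
    obtain ⟨x, ζ, hζ, hn⟩ :=
      Representation.exists_hasEigenvalue_orderOf_eq_of_dvd _ φ hv hφ hdvd
    exact ⟨x, ζ, hζ, hn⟩
  · rintro ⟨x, ζ, hζ, rfl⟩
    obtain ⟨φ, hv, hdvd⟩ :=
      Representation.exists_monoidHom_zpowers_of_hasEigenvalue V.ρ hζ
    exact ⟨_, φ, hv, hdvd⟩

theorem stmt_11 (G : Type) [Group G] [Fintype G] (V : FDRep ℂ G) (n : ℕ) (hn : 0 < n) :
    (∃ (H : Subgroup G) (φ : H →* ℂˣ),
        (∃ m : ℕ, 0 < m ∧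
          (Nat.card H : ℂ)⁻¹ * ∑ᶠ h : H, V.character (h : G) * ((φ h)⁻¹ : ℂˣ) = (m : ℂ)) ∧
        n ∣ orderOf φ) ↔
      ∃ (x : G) (ζ : ℂ), Module.End.HasEigenvalue (V.ρ x) ζ ∧ n = orderOf ζ :=
  stmt_11_general G V n
end

section
/- Let G be a finite group, χ the character of a representation 𝒳, and n a positive integer. If some subgroup H ≤ G has a linear constituent φ of χ|_H with n ∣ o(φ), then there exists a cyclic subgroup K ≤ G and a linear constituent ψ of χ|_K with o(ψ) = n. -/
/-!
The multiplicity of a linear character `λ` of a subgroup `K` in `χ|_K` is the dimension of the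
`λ`-eigenspace of `K` on `V`, i.e. of the invariants of the twisted representation
`k ↦ λ(k)⁻¹ • ρ(k)`. That eigenspace only grows when `K` shrinks, so linear constituents restrict
to linear constituents. Since `φ(H)` is a finite subgroup of `ℂˣ`, it is cyclic, generated by some
`φ(h)` with `o(φ(h)) = o(φ)`; restricting `φ` to `K = ⟨h ^ (o(φ) / n)⟩` gives a constituent of
order exactly `n`.
-/

open Module Representation

section Order

variable {S M : Type*} [Group S] [CommGroup M]

theorem orderOf_monoidHom_eq_orderOf_apply (χ : S →* M) (s : S)
    (hs : ∀ x, χ x ∈ Subgroup.zpowers (χ s)) : orderOf χ = orderOf (χ s) := by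
  refine orderOf_eq_orderOf_iff.mpr fun k => ⟨fun hk => by simp [← MonoidHom.pow_apply, hk],
    fun hk => MonoidHom.ext fun x => ?_⟩
  obtain ⟨m, hm⟩ := Subgroup.mem_zpowers_iff.mp (hs x)
  rw [MonoidHom.pow_apply, MonoidHom.one_apply, ← hm, ← zpow_natCast, ← zpow_mul, mul_comm,
    zpow_mul, zpow_natCast, hk, one_zpow]

theorem orderOf_comp_inclusion_zpowers {G : Type*} [Group G] {H : Subgroup G} (φ : H →* M)
    (b : H) :
    orderOf (φ.comp (Subgroup.inclusion (Subgroup.zpowers_le.mpr b.2))) = orderOf (φ b) := by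
  refine orderOf_monoidHom_eq_orderOf_apply _
    (⟨b, Subgroup.mem_zpowers _⟩ : Subgroup.zpowers (b : G)) fun x => ?_
  obtain ⟨m, hm⟩ := Subgroup.mem_zpowers_iff.mp x.2
  exact ⟨m, (map_zpow _ _ m).symm.trans (congrArg _ (Subtype.ext (by simpa using hm)))⟩

theorem exists_orderOf_apply_eq_orderOf {R : Type*} [CommRing R] [IsDomain R] [Finite S]
    (φ : S →* Rˣ) : ∃ s, orderOf (φ s) = orderOf φ := by
  have : Finite φ.range := Finite.of_surjective _ φ.rangeRestrict_surjective
  obtain ⟨⟨_, s, rfl⟩, hgen⟩ := IsCyclic.exists_generator (α := φ.range)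
  refine ⟨s, (orderOf_monoidHom_eq_orderOf_apply φ s fun x => ?_).symm⟩
  obtain ⟨m, hm⟩ := hgen ⟨φ x, x, rfl⟩
  exact ⟨m, congrArg Subtype.val hm⟩

end Order

section Twist

variable {k G : Type} [Field k] [Group G] (V : FDRep k G)

noncomputable def twistedRestriction (K : Subgroup G) (ψ : K →* kˣ) : Representation k K V where
  toFun x := (((ψ x)⁻¹ : kˣ) : k) • V.ρ x
  map_one' := by simp
  map_mul' x y := by
    ext v
    simp only [map_mul, Module.End.mul_apply, LinearMap.smul_apply, map_smul, smul_smul,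
      Units.val_mul, mul_inv, Subgroup.coe_mul]
    rw [mul_comm]

theorem character_twistedRestriction (K : Subgroup G) (ψ : K →* kˣ) (x : K) :
    (FDRep.of (twistedRestriction V K ψ)).character x =
      V.character x * (((ψ x)⁻¹ : kˣ) : k) := by
  change LinearMap.trace k _ ((((ψ x)⁻¹ : kˣ) : k) • V.ρ x) = _
  rw [map_smul, smul_eq_mul, mul_comm]
  rfl

theorem average_twisted_character_eq_finrank_invariants [CharZero k] (K : Subgroup G) [Finite K]
    (ψ : K →* kˣ) :
    (Nat.card K : k)⁻¹ * ∑ᶠ x : K, V.character x * (((ψ x)⁻¹ : kˣ) : k) =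
      finrank k (invariants (twistedRestriction V K ψ)) := by
  have : Fintype K := Fintype.ofFinite K
  have : Invertible (Nat.card K : k) := invertibleOfNonzero (by exact_mod_cast Nat.card_pos.ne')
  simp only [finsum_eq_sum_of_fintype, ← character_twistedRestriction]
  exact FDRep.average_char_eq_finrank_invariants _

theorem finrank_invariants_twistedRestriction_le {H K : Subgroup G} (hKH : K ≤ H)
    (φ : H →* kˣ) :
    finrank k (invariants (twistedRestriction V H φ)) ≤
      finrank k (invariants (twistedRestriction V K (φ.comp (Subgroup.inclusion hKH)))) :=
  Submodule.finrank_mono fun _ hv x => hv (Subgroup.inclusion hKH x)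

end Twist

theorem stmt_12_general (G : Type) [Group G] [Fintype G] (V : FDRep ℂ G) (n : ℕ)
    (H : Subgroup G) (φ : H →* ℂˣ)
    (hconst : ∃ m : ℕ, 0 < m ∧
      (Nat.card H : ℂ)⁻¹ * ∑ᶠ h : H, V.character (h : G) * ((φ h)⁻¹ : ℂˣ) = (m : ℂ))
    (hord : n ∣ orderOf φ) :
    ∃ (K : Subgroup G) (ψ : K →* ℂˣ), IsCyclic K ∧
      (∃ m : ℕ, 0 < m ∧
        (Nat.card K : ℂ)⁻¹ * ∑ᶠ x : K, V.character (x : G) * ((ψ x)⁻¹ : ℂˣ) = (m : ℂ)) ∧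
      orderOf ψ = n := by
  obtain ⟨m, hm, hmult⟩ := hconst
  obtain ⟨h, hh⟩ := exists_orderOf_apply_eq_orderOf φ
  rw [← hh] at hord
  set b := h ^ (orderOf (φ h) / n)
  have hKH : Subgroup.zpowers (b : G) ≤ H := Subgroup.zpowers_le.mpr b.2
  refine ⟨_, φ.comp (Subgroup.inclusion hKH), inferInstance,
    ⟨_, ?_, average_twisted_character_eq_finrank_invariants V _ _⟩, ?_⟩
  · rw [average_twisted_character_eq_finrank_invariants, Nat.cast_inj] at hmult
    exact hm.trans_le (hmult ▸ finrank_invariants_twistedRestriction_le V hKH φ)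
  · rw [orderOf_comp_inclusion_zpowers, map_pow]
    exact orderOf_pow_orderOf_div (φ.isOfFinOrder (isOfFinOrder_of_finite h)).orderOf_pos.ne' hord

theorem stmt_12 (G : Type) [Group G] [Fintype G] (V : FDRep ℂ G) (n : ℕ) (hn : 0 < n)
    (H : Subgroup G) (φ : H →* ℂˣ)
    (hconst : ∃ m : ℕ, 0 < m ∧
      (Nat.card H : ℂ)⁻¹ * ∑ᶠ h : H, V.character (h : G) * ((φ h)⁻¹ : ℂˣ) = (m : ℂ))
    (hord : n ∣ orderOf φ) :
    ∃ (K : Subgroup G) (ψ : K →* ℂˣ), IsCyclic K ∧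
      (∃ m : ℕ, 0 < m ∧
        (Nat.card K : ℂ)⁻¹ * ∑ᶠ x : K, V.character (x : G) * ((ψ x)⁻¹ : ℂˣ) = (m : ℂ)) ∧
      orderOf ψ = n :=
  stmt_12_general G V n H φ hconst hord
end
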